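/- arXiv:1805.03405 — 4 statements merged into one kernel-verified Lean document; each statement's English description precedes it below -/
import Mathlib

section
/- Let G be a finite simple bipartite graph with at least two vertices that is 2P₃-free, and let (A, B) be a bipartition of G such that the labeled bigraph (G, A, B) is right-Sperner. Then there exist a partition A = {z} ∪ A¹ ∪ A² and a partition B = B¹ ∪ B² (all parts pairwise disjoint, A¹, A², B¹, B² possibly empty) such that: z is adjacent to every vertex of B¹ and to no vertex of B²; every vertex of A¹ is adjacent to every vertex of B²; no vertex of A² is adjacent to any vertex of B¹; and the labeled bigraphs (G[A¹ ∪ B¹], A¹, B¹) and (G[A² ∪ B²], A², B²) induced by A¹ ∪ B¹ and A² ∪ B², respectively, are 2P₃-free and right-Sperner. -/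
open Finset

open scoped Classical

/-- A hypergraph (given by its set of hyperedges, each a finite set of vertices)
is 1-Sperner if every two distinct hyperedges `e` and `f` satisfy
`min |e \ f| |f \ e| = 1`. -/
def OneSperner {V : Type*} [DecidableEq V] (E : Set (Finset V)) : Prop :=
  ∀ e ∈ E, ∀ f ∈ E, e ≠ f → min (e \ f).card (f \ e).card = 1

/-- A set of vertices `X` is dependent in the hypergraph with hyperedge set `E`
if it contains some hyperedge; it is independent otherwise. -/
def HypDep {V : Type*} (E : Set (Finset V)) (X : Finset V) : Prop :=
  ∃ e ∈ E, e ⊆ X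

/-- A hypergraph is threshold if there are nonnegative integer vertex weights and a
threshold such that a vertex set has weight at least the threshold iff it contains
a hyperedge. -/
def HypThreshold {V : Type*} [Fintype V] (E : Set (Finset V)) : Prop :=
  ∃ (w : V → ℕ) (t : ℕ), ∀ X : Finset V, (t ≤ ∑ x ∈ X, w x) ↔ HypDep E X

/-- The characteristic vector of a finite vertex set. -/
def chiVec {V : Type*} [DecidableEq V] (X : Finset V) : V → ℕ :=
  fun v => if v ∈ X then 1 else 0

/-- A hypergraph is 2-asummable if there are no two independent sets `A₁, A₂`
and two dependent sets `B₁, B₂` with `χ^{A₁} + χ^{A₂} = χ^{B₁} + χ^{B₂}`. -/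
def TwoAsummable {V : Type*} [DecidableEq V] (E : Set (Finset V)) : Prop :=
  ¬ ∃ A₁ A₂ B₁ B₂ : Finset V,
      ¬ HypDep E A₁ ∧ ¬ HypDep E A₂ ∧ HypDep E B₁ ∧ HypDep E B₂ ∧
      ∀ v, chiVec A₁ v + chiVec A₂ v = chiVec B₁ v + chiVec B₂ v

/-- A graph is threshold if there are nonnegative integer vertex weights and a threshold
such that a vertex set has weight at most the threshold iff it is an independent set. -/
def ThresholdGraph {V : Type*} [Fintype V] (G : SimpleGraph V) : Prop :=
  ∃ (w : V → ℕ) (t : ℕ), ∀ X : Finset V,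
    ((∑ x ∈ X, w x) ≤ t ↔ ∀ u ∈ X, ∀ v ∈ X, ¬ G.Adj u v)

/-- A vertex cover of a graph: every edge has an endpoint in the set. -/
def IsVertexCover {V : Type*} (G : SimpleGraph V) (S : Finset V) : Prop :=
  ∀ u v : V, G.Adj u v → u ∈ S ∨ v ∈ S

/-- The vertex cover hypergraph: hyperedges are the inclusion-minimal vertex covers. -/
def VCHyp {V : Type*} (G : SimpleGraph V) : Set (Finset V) :=
  {S | IsVertexCover G S ∧ ∀ T : Finset V, IsVertexCover G T → T ⊆ S → T = S}

/-- The clique hypergraph: hyperedges are the inclusion-maximal cliques. -/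
def CliqueHyp {V : Type*} (G : SimpleGraph V) : Set (Finset V) :=
  {S | G.IsClique (S : Set V) ∧ ∀ T : Finset V, G.IsClique (T : Set V) → S ⊆ T → T = S}

/-- The closed neighborhood `N[v]` of a vertex, as a finite set. -/
def closedNbhd {V : Type*} [Fintype V] [DecidableEq V] (G : SimpleGraph V)
    [DecidableRel G.Adj] (v : V) : Finset V :=
  insert v (G.neighborFinset v)

/-- The closed neighborhood hypergraph: hyperedges are the inclusion-minimal sets of
the form `N[v]`. -/
def NHyp {V : Type*} [Fintype V] [DecidableEq V] (G : SimpleGraph V)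
    [DecidableRel G.Adj] : Set (Finset V) :=
  {S | (∃ v : V, S = closedNbhd G v) ∧
       ∀ v : V, closedNbhd G v ⊆ S → closedNbhd G v = S}

/-- A dominating set: every vertex is in the set or has a neighbor in it. -/
def IsDomSet {V : Type*} (G : SimpleGraph V) (D : Finset V) : Prop :=
  ∀ v : V, v ∈ D ∨ ∃ u ∈ D, G.Adj u v

/-- The dominating set hypergraph: hyperedges are the inclusion-minimal dominating sets. -/
def DomHyp {V : Type*} (G : SimpleGraph V) : Set (Finset V) :=
  {D | IsDomSet G D ∧ ∀ T : Finset V, IsDomSet G T → T ⊆ D → T = D}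

/-- A graph is domishold if there are nonnegative integer vertex weights and a threshold
such that a vertex set has weight at least the threshold iff it is a dominating set. -/
def Domishold {V : Type*} [Fintype V] (G : SimpleGraph V) : Prop :=
  ∃ (w : V → ℕ) (t : ℕ), ∀ X : Finset V, (t ≤ ∑ x ∈ X, w x) ↔ IsDomSet G X

/-- `(K, I)` is a split partition of `G`: `K` is a clique, `I` an independent set,
they are disjoint and cover all vertices. -/
def IsSplitPartition {V : Type*} [Fintype V] (G : SimpleGraph V) (K I : Finset V) : Prop :=
  Disjoint K I ∧ K ∪ I = Finset.univ ∧ G.IsClique (K : Set V) ∧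
    ∀ u ∈ I, ∀ v ∈ I, ¬ G.Adj u v

/-- The labeled split graph `(G, K, I)` is clique-Sperner: for `u, v ∈ K`,
`N(u) ∩ I ⊆ N(v) ∩ I` implies `u = v`. -/
def CliqueSperner {V : Type*} (G : SimpleGraph V) (K I : Finset V) : Prop :=
  ∀ u ∈ K, ∀ v ∈ K,
    G.neighborSet u ∩ (I : Set V) ⊆ G.neighborSet v ∩ (I : Set V) → u = v

/-- The labeled split graph `(G, K, I)` is independent-Sperner: for `u, v ∈ I`,
`N(u) ⊆ N(v)` implies `u = v`. -/
def IndependentSperner {V : Type*} (G : SimpleGraph V) (K I : Finset V) : Prop :=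
  ∀ u ∈ I, ∀ v ∈ I, G.neighborSet u ⊆ G.neighborSet v → u = v

/-- `(A, B)` is a bipartition of `G` into two disjoint independent sets covering
all vertices. -/
def IsBipartition {V : Type*} [Fintype V] (G : SimpleGraph V) (A B : Finset V) : Prop :=
  Disjoint A B ∧ A ∪ B = Finset.univ ∧
    (∀ u ∈ A, ∀ v ∈ A, ¬ G.Adj u v) ∧ (∀ u ∈ B, ∀ v ∈ B, ¬ G.Adj u v)

/-- The labeled bigraph `(G, A, B)` is right-Sperner: for `u, v ∈ B`,
`N(u) ⊆ N(v)` implies `u = v`. -/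
def RightSperner {V : Type*} (G : SimpleGraph V) (A B : Finset V) : Prop :=
  ∀ u ∈ B, ∀ v ∈ B, G.neighborSet u ⊆ G.neighborSet v → u = v

/-- The graph `2P₃`: disjoint union of the paths `0-1-2` and `3-4-5`. -/
def twoP3 : SimpleGraph (Fin 6) :=
  SimpleGraph.fromRel (fun u v =>
    (u, v) ∈ ([(0,1),(1,2),(3,4),(4,5)] : List (Fin 6 × Fin 6)))

/-- The graph `H`: obtained from `2P₃` (paths `0-1-2` and `3-4-5`) by adding the
edge `1-4` between the two middle vertices. -/
def graphH : SimpleGraph (Fin 6) :=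
  SimpleGraph.fromRel (fun u v =>
    (u, v) ∈ ([(0,1),(1,2),(3,4),(4,5),(1,4)] : List (Fin 6 × Fin 6)))

/-- The domination number: minimum size of a dominating set. -/
noncomputable def gamma {W : Type*} [Fintype W] (G : SimpleGraph W) : ℕ :=
  sInf {n | ∃ D : Finset W, IsDomSet G D ∧ D.card = n}

/-- The total domination number: minimum size of a total dominating set. -/
noncomputable def gammaT {W : Type*} [Fintype W] (G : SimpleGraph W) : ℕ :=
  sInf {n | ∃ D : Finset W, (∀ v : W, ∃ u ∈ D, G.Adj u v) ∧ D.card = n}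

/-- The connected domination number: minimum size of a connected dominating set. -/
noncomputable def gammaC {W : Type*} [Fintype W] (G : SimpleGraph W) : ℕ :=
  sInf {n | ∃ D : Finset W, IsDomSet G D ∧ (G.induce (D : Set W)).Connected ∧ D.card = n}

/-- The co-occurrence graph of a hypergraph: two distinct vertices are adjacent iff
some hyperedge contains both. -/
def coOccurrenceGraph {W : Type*} (E : Set (Finset W)) : SimpleGraph W where
  Adj u v := u ≠ v ∧ ∃ e ∈ E, u ∈ e ∧ v ∈ e
  symm := by
    constructor
    rintro u v ⟨h, e, he, hu, hv⟩
    exact ⟨h.symm, e, he, hv, hu⟩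
  loopless := by
    constructor
    rintro u ⟨h, -⟩
    exact h rfl

/-- The edge-clique split graph of a hypergraph `(V, E)`: vertex set `E ⊕ V`, the
hyperedges form a clique, the vertices an independent set, and `v ∈ V` is adjacent
to `e ∈ E` iff `v ∈ e`. -/
def edgeCliqueGraph {V : Type*} (E : Finset (Finset V)) :
    SimpleGraph ({e // e ∈ E} ⊕ V) where
  Adj x y :=
    match x, y with
    | Sum.inl e, Sum.inl f => e ≠ f
    | Sum.inl e, Sum.inr v => v ∈ (e : Finset V)
    | Sum.inr v, Sum.inl e => v ∈ (e : Finset V)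
    | Sum.inr _, Sum.inr _ => False
  symm := by
    constructor
    rintro (e | u) (f | v) h
    · exact Ne.symm h
    · exact h
    · exact h
    · exact h.elim
  loopless := by
    constructor
    rintro (e | v) h
    · exact h rfl
    · exact h

/-! `z ∈ A` is a pivot if it is the only vertex separating `x` from `y` in `B` whenever it
separates them at all. A pivot yields the decomposition: `B¹ = N(z) ∩ B`, `B² = B \ N(z)`, `A¹` is
the set of vertices other than `z` complete to `B²`, and the pivot property makes the rest of
`A` anticomplete to `B¹`, so every neighbour of `B¹` or `B²` outside its own part is adjacent
to all of it, and right-Spernerness passes to both parts.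

Pivots exist because 2P₃-freeness makes the neighbourhoods of `B` 1-Sperner: for distinct
`x, y ∈ B`, one of `N(x) \ N(y)`, `N(y) \ N(x)` has at most one element. If `z` is not a pivot,
witnessed by `z, a ∈ N(x) \ N(y)`, then `N(y) \ N(x) = {b}`, and every neighbour of `b` outside
`N(z)` has smaller degree than `x ∈ N(z) \ N(b)`. Hence a `z` whose neighbourhood is least in
the lexicographic order of degree sequences is a pivot. -/

open SimpleGraph

lemma twoP3_adj_iff (i j : Fin 6) : twoP3.Adj i j ↔
    (i, j) ∈ ([(0,1),(1,0),(1,2),(2,1),(3,4),(4,3),(4,5),(5,4)] : List (Fin 6 × Fin 6)) := by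
  fin_cases i <;> fin_cases j <;> simp [twoP3, fromRel_adj]

lemma Finset.sum_pow_lt_sum_pow {ι : Type*} [DecidableEq ι] {s t : Finset ι} {f : ι → ℕ}
    {c : ℕ} {x : ι} (hc : #(t \ s) < c) (hx : x ∈ s \ t) (hlt : ∀ w ∈ t \ s, f w < f x) :
    ∑ w ∈ t, c ^ f w < ∑ w ∈ s, c ^ f w := by
  have hsmall : ∑ w ∈ t \ s, c ^ f w < c ^ f x := by
    refine lt_of_mul_lt_mul_left (a := c) ?_ (Nat.zero_le _)
    calc c * ∑ w ∈ t \ s, c ^ f w = ∑ w ∈ t \ s, c ^ (f w + 1) := by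
          simp only [mul_sum, pow_succ']
      _ ≤ ∑ w ∈ t \ s, c ^ f x := sum_le_sum fun w hw ↦ Nat.pow_le_pow_right (by omega) (hlt w hw)
      _ = #(t \ s) * c ^ f x := by rw [sum_const, smul_eq_mul]
      _ < c * c ^ f x := Nat.mul_lt_mul_of_pos_right hc (Nat.pow_pos (by omega))
  have hxs : c ^ f x ≤ ∑ w ∈ s \ t, c ^ f w :=
    single_le_sum (f := fun w ↦ c ^ f w) (fun _ _ ↦ Nat.zero_le _) hx
  rw [← sum_inter_add_sum_sdiff t s, ← sum_inter_add_sum_sdiff s t, inter_comm]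
  omega

lemma RightSperner.restrict {V : Type*} {G : SimpleGraph V} {A B : Finset V}
    (hrs : RightSperner G A B) {B' : Finset V} {S : Set V}
    (hB' : B' ⊆ B) (hout : ∀ u ∈ B', ∀ v ∈ B', ∀ w ∉ S, G.Adj u w → G.Adj v w) :
    ∀ u ∈ B', ∀ v ∈ B', G.neighborSet u ∩ S ⊆ G.neighborSet v ∩ S → u = v := by
  intro u hu v hv h
  refine hrs u (hB' hu) v (hB' hv) fun w hw ↦ ?_
  by_cases hwS : w ∈ S
  · exact (h ⟨hw, hwS⟩).1
  · exact hout u hu v hv w hwS hw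

section Bipartite

variable {V : Type*} [Fintype V] {G : SimpleGraph V} {A B : Finset V}

lemma IsBipartition.symm (hbp : IsBipartition G A B) : IsBipartition G B A :=
  ⟨hbp.1.symm, union_comm A B ▸ hbp.2.1, hbp.2.2.2, hbp.2.2.1⟩

lemma IsBipartition.mem_left_of_adj (hbp : IsBipartition G A B) {u v : V} (hu : u ∈ B)
    (huv : G.Adj u v) : v ∈ A := by
  have hv : v ∈ A ∪ B := hbp.2.1 ▸ mem_univ v
  exact (mem_union.mp hv).resolve_right fun hv ↦ hbp.2.2.2 u hu v hv huv

lemma IsBipartition.nonempty_twoP3_embedding (hbp : IsBipartition G A B) {x y a₁ a₂ b₁ b₂ : V}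
    (hx : x ∈ B) (hy : y ∈ B) (ha : a₁ ≠ a₂) (hb : b₁ ≠ b₂)
    (hxa₁ : G.Adj x a₁) (hxa₂ : G.Adj x a₂) (hyb₁ : G.Adj y b₁) (hyb₂ : G.Adj y b₂)
    (hya₁ : ¬ G.Adj y a₁) (hya₂ : ¬ G.Adj y a₂) (hxb₁ : ¬ G.Adj x b₁) (hxb₂ : ¬ G.Adj x b₂) :
    Nonempty (twoP3 ↪g G) := by
  have ha₁ := hbp.mem_left_of_adj hx hxa₁
  have ha₂ := hbp.mem_left_of_adj hx hxa₂
  have hb₁ := hbp.mem_left_of_adj hy hyb₁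
  have hb₂ := hbp.mem_left_of_adj hy hyb₂
  obtain ⟨hdisj, -, hA, hB⟩ := hbp
  have hAB : ∀ {u v}, u ∈ A → v ∈ B → u ≠ v := fun hu hv h ↦
    disjoint_left.mp hdisj hu (h ▸ hv)
  let f : Fin 6 → V := [a₁, x, a₂, b₁, y, b₂].get
  have hf : Function.Injective f := by
    refine List.nodup_iff_injective_get.mp ?_
    simp only [List.nodup_cons, List.mem_cons, List.not_mem_nil]
    grind
  refine ⟨⟨⟨f, hf⟩, fun {i j} ↦ ?_⟩⟩
  rw [twoP3_adj_iff]
  fin_cases i <;> fin_cases j <;> simp [f] <;> grind [SimpleGraph.Adj.symm, SimpleGraph.irrefl]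

lemma RightSperner.nonempty_left (hrs : RightSperner G A B) (hbp : IsBipartition G A B)
    (hcard : 1 < Fintype.card V) : A.Nonempty := by
  rw [nonempty_iff_ne_empty]
  rintro rfl
  obtain ⟨u, v, huv⟩ := Fintype.exists_pair_of_one_lt_card hcard
  have hB : ∀ w, w ∈ B := by simpa [eq_univ_iff_forall] using hbp.2.1
  have hN : ∀ w, G.neighborSet w = ∅ := fun w ↦
    Set.eq_empty_iff_forall_notMem.mpr fun t ht ↦ by simpa using hbp.mem_left_of_adj (hB w) ht
  exact huv (hrs u (hB u) v (hB v) (by simp [hN]))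

variable [DecidableRel G.Adj]

lemma RightSperner.eq_of_neighborFinset_subset (hrs : RightSperner G A B) {x y : V}
    (hx : x ∈ B) (hy : y ∈ B) (h : G.neighborFinset x ⊆ G.neighborFinset y) : x = y :=
  hrs x hx y hy (by simpa only [← coe_neighborFinset] using coe_subset.mpr h)

variable [DecidableEq V]

lemma IsBipartition.card_sdiff_le_one (hfree : ¬ Nonempty (twoP3 ↪g G))
    (hbp : IsBipartition G A B) {x y : V} (hx : x ∈ B) (hy : y ∈ B)
    (hxy : 2 ≤ #(G.neighborFinset x \ G.neighborFinset y)) :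
    #(G.neighborFinset y \ G.neighborFinset x) ≤ 1 := by
  by_contra! hyx
  obtain ⟨a₁, ha₁, a₂, ha₂, ha⟩ := one_lt_card.mp hxy
  obtain ⟨b₁, hb₁, b₂, hb₂, hb⟩ := one_lt_card.mp hyx
  simp only [mem_sdiff, mem_neighborFinset] at ha₁ ha₂ hb₁ hb₂
  exact hfree (hbp.nonempty_twoP3_embedding hx hy ha hb ha₁.1 ha₂.1 hb₁.1 hb₂.1
    ha₁.2 ha₂.2 hb₁.2 hb₂.2)

lemma degree_lt_of_adj_of_sdiff_subset_singleton (hfree : ¬ Nonempty (twoP3 ↪g G))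
    (hbp : IsBipartition G A B) (hrs : RightSperner G A B) {x y z b w : V}
    (hx : x ∈ B) (hy : y ∈ B) (hw : w ∈ B) (hzx : G.Adj x z) (hzy : ¬ G.Adj y z)
    (hxy : 2 ≤ #(G.neighborFinset x \ G.neighborFinset y))
    (hb : G.neighborFinset y \ G.neighborFinset x ⊆ {b}) (hbw : G.Adj w b) (hzw : ¬ G.Adj w z) :
    G.degree w < G.degree x := by
  rw [← card_neighborFinset_eq_degree, ← card_neighborFinset_eq_degree]
  by_cases hxw : 2 ≤ #(G.neighborFinset x \ G.neighborFinset w)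
  · have := hbp.card_sdiff_le_one hfree hx hw hxw
    exact card_sdiff_lt_card_sdiff_iff.mp (by omega)
  -- Otherwise `N(x) \ N(w) = {z}`, which forces `N(y) ⊆ N(w)`.
  have hyw : G.neighborFinset y ⊆ G.neighborFinset w := by
    intro s hs
    rw [mem_neighborFinset] at hs ⊢
    by_cases hsb : s = b
    · exact hsb ▸ hbw
    have hxs : G.Adj x s := by
      by_contra hxs
      exact hsb (mem_singleton.mp (hb (by simp [hs, hxs])))
    by_contra hws
    have hxw' : #(G.neighborFinset x \ G.neighborFinset w) ≤ 1 := by omega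
    have hsz : s = z := card_le_one.mp hxw' s (by simp [hxs, hws]) z (by simp [hzx, hzw])
    exact hzy (hsz ▸ hs)
  obtain rfl := hrs.eq_of_neighborFinset_subset hy hw hyw
  exact absurd hxy hxw

def IsPivot (G : SimpleGraph V) (B : Finset V) (z : V) : Prop :=
  ∀ x ∈ B, ∀ y ∈ B, G.Adj z x → ¬ G.Adj z y → ∀ a ≠ z, G.Adj a x → G.Adj a y

lemma exists_isPivot (hfree : ¬ Nonempty (twoP3 ↪g G)) (hbp : IsBipartition G A B)
    (hrs : RightSperner G A B) (hA : A.Nonempty) : ∃ z ∈ A, IsPivot G B z := by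
  -- Read in base `c`, `μ z` compares neighbourhoods lexicographically by decreasing degree.
  let c := Fintype.card V + 1
  let μ : V → ℕ := fun z ↦ ∑ w ∈ G.neighborFinset z, c ^ G.degree w
  obtain ⟨z, hzA, hzmin⟩ := A.exists_min_image μ hA
  refine ⟨z, hzA, fun x hx y hy hzx hzy a haz hax ↦ ?_⟩
  by_contra hay
  rw [G.adj_comm] at hzx hzy hax hay
  have hxy : 2 ≤ #(G.neighborFinset x \ G.neighborFinset y) :=
    one_lt_card.mpr ⟨z, by simp [hzx, hzy], a, by simp [hax, hay], haz.symm⟩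
  have hyx : (G.neighborFinset y \ G.neighborFinset x).Nonempty :=
    sdiff_nonempty.mpr fun h ↦ hzy (hrs.eq_of_neighborFinset_subset hy hx h ▸ hzx)
  obtain ⟨b, hb⟩ : ∃ b, G.neighborFinset y \ G.neighborFinset x = {b} :=
    card_eq_one.mp (le_antisymm (hbp.card_sdiff_le_one hfree hx hy hxy) hyx.card_pos)
  have hbyx : b ∈ G.neighborFinset y \ G.neighborFinset x := hb ▸ mem_singleton_self b
  rw [mem_sdiff, mem_neighborFinset, mem_neighborFinset] at hbyx
  have hbA : b ∈ A := hbp.mem_left_of_adj hy hbyx.1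
  have hμ : μ b < μ z := by
    refine sum_pow_lt_sum_pow (x := x) (Nat.lt_succ_of_le (card_le_univ _))
      (by simpa [G.adj_comm b] using ⟨hzx.symm, hbyx.2⟩) fun w hw ↦ ?_
    simp only [mem_sdiff, mem_neighborFinset, G.adj_comm b, G.adj_comm z] at hw
    exact degree_lt_of_adj_of_sdiff_subset_singleton hfree hbp hrs hx hy
      (hbp.symm.mem_left_of_adj hbA hw.1.symm) hzx hzy hxy hb.subset hw.1 hw.2
  exact (hzmin b hbA).not_gt hμ

end Bipartite

lemma not_nonempty_embedding_induce {V W : Type*} {G : SimpleGraph V} {H : SimpleGraph W}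
    (h : ¬ Nonempty (H ↪g G)) (s : Set V) : ¬ Nonempty (H ↪g G.induce s) :=
  fun ⟨e⟩ ↦ h ⟨(Embedding.induce s).comp e⟩

theorem stmt11 {V : Type*} [Fintype V] [DecidableEq V] (G : SimpleGraph V)
    (hcard : 1 < Fintype.card V)
    (hfree : ¬ Nonempty (twoP3 ↪g G))
    (A B : Finset V) (hbp : IsBipartition G A B) (hrs : RightSperner G A B) :
    ∃ (z : V) (A1 A2 B1 B2 : Finset V),
      z ∈ A ∧ z ∉ A1 ∧ z ∉ A2 ∧
      insert z (A1 ∪ A2) = A ∧ Disjoint A1 A2 ∧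
      B1 ∪ B2 = B ∧ Disjoint B1 B2 ∧
      (∀ v ∈ B1, G.Adj z v) ∧ (∀ v ∈ B2, ¬ G.Adj z v) ∧
      (∀ u ∈ A1, ∀ v ∈ B2, G.Adj u v) ∧
      (∀ u ∈ A2, ∀ v ∈ B1, ¬ G.Adj u v) ∧
      (¬ Nonempty (twoP3 ↪g G.induce ((A1 ∪ B1 : Finset V) : Set V))) ∧
      (¬ Nonempty (twoP3 ↪g G.induce ((A2 ∪ B2 : Finset V) : Set V))) ∧
      (∀ u ∈ B1, ∀ v ∈ B1,
        G.neighborSet u ∩ ((A1 ∪ B1 : Finset V) : Set V) ⊆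
          G.neighborSet v ∩ ((A1 ∪ B1 : Finset V) : Set V) → u = v) ∧
      (∀ u ∈ B2, ∀ v ∈ B2,
        G.neighborSet u ∩ ((A2 ∪ B2 : Finset V) : Set V) ⊆
          G.neighborSet v ∩ ((A2 ∪ B2 : Finset V) : Set V) → u = v) := by
  have hA := hrs.nonempty_left hbp hcard
  obtain ⟨z, hzA, hz⟩ := exists_isPivot hfree hbp hrs hA
  set B₁ := B.filter (G.Adj z)
  set B₂ := B.filter (¬ G.Adj z ·)
  set A₁ := (A.erase z).filter (fun a ↦ ∀ v ∈ B₂, G.Adj a v)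
  set A₂ := (A.erase z).filter (fun a ↦ ¬ ∀ v ∈ B₂, G.Adj a v)
  have hA₁ : ∀ u ∈ A₁, ∀ v ∈ B₂, G.Adj u v := fun u hu ↦ (mem_filter.mp hu).2
  have hA₂ : ∀ u ∈ A₂, ∀ v ∈ B₁, ¬ G.Adj u v := by
    intro u hu v hv huv
    simp only [A₂, B₁, B₂, mem_filter, mem_erase, not_forall] at hu hv
    obtain ⟨⟨huz, -⟩, y, ⟨hy, hzy⟩, huy⟩ := hu
    exact huy (hz v hv.1 y hy hv.2 hzy u huz huv)
  refine ⟨z, A₁, A₂, B₁, B₂, hzA, by simp [A₁], by simp [A₂],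
    by rw [filter_union_filter_not_eq, insert_erase hzA], disjoint_filter_filter_not _ _ _,
    filter_union_filter_not_eq _ _, disjoint_filter_filter_not _ _ _,
    fun v hv ↦ (mem_filter.mp hv).2, fun v hv ↦ (mem_filter.mp hv).2, hA₁, hA₂,
    not_nonempty_embedding_induce hfree _, not_nonempty_embedding_induce hfree _,
    hrs.restrict (filter_subset _ _) ?_, hrs.restrict (filter_subset _ _) ?_⟩
  · intro u hu v hv w hw huw
    have hwA := hbp.mem_left_of_adj (mem_filter.mp hu).1 huw
    by_cases hwz : w = z
    · exact hwz ▸ (mem_filter.mp hv).2.symm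
    · have hwA₂ : w ∈ A₂ := by simp_all [A₁, A₂]
      exact absurd huw.symm (hA₂ w hwA₂ u hu)
  · intro u hu v hv w hw huw
    have hwA := hbp.mem_left_of_adj (mem_filter.mp hu).1 huw
    have hwz : w ≠ z := fun h ↦ (mem_filter.mp hu).2 (h ▸ huw.symm)
    have hwA₁ : w ∈ A₁ := by simp_all [A₁, A₂]
    exact (hA₁ w hwA₁ v hv).symm
end

section
/- Let (G, K, I) be a labeled split graph (finite and simple) that is clique-Sperner and such that G is H-free. Then the hypergraph with vertex set I whose hyperedges are exactly the sets N(v) ∩ I for v ∈ K is 1-Sperner. -/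
open Finset

open scoped Classical

/-! By clique-Sperner, two distinct `u, v ∈ K` each have a neighbour in `I` that the other
lacks. If each had two such private neighbours, `x, y` for `u` and `x', y'` for `v`, then
`u, v, x, y, x', y'` would induce `H`, since `K` is a clique and `I` is independent. -/

namespace SimpleGraph

variable {V : Type*} {G : SimpleGraph V}

set_option synthInstance.maxSize 2048 in
lemma graphH_twins (i j : Fin 6) (h : ∀ k, graphH.Adj i k ↔ graphH.Adj j k) :
    i = j ∨ (i = 0 ∧ j = 2) ∨ (i = 2 ∧ j = 0) ∨ (i = 3 ∧ j = 5) ∨ (i = 5 ∧ j = 3) := by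
  revert i j
  simp only [graphH, fromRel_adj, List.mem_cons, Prod.mk.injEq, List.not_mem_nil, or_false]
  decide

/-- Injectivity is automatic except on the two pairs of twins of `H`. -/
lemma nonempty_graphH_embedding_of_adj_iff (f : Fin 6 → V)
    (hf : ∀ i j, G.Adj (f i) (f j) ↔ graphH.Adj i j) (h02 : f 0 ≠ f 2) (h35 : f 3 ≠ f 5) :
    Nonempty (graphH ↪g G) := by
  refine ⟨⟨⟨f, fun i j hij => ?_⟩, hf _ _⟩⟩
  have htwin : ∀ k, graphH.Adj i k ↔ graphH.Adj j k := fun k => by rw [← hf, ← hf, hij]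
  rcases graphH_twins i j htwin with h | ⟨rfl, rfl⟩ | ⟨rfl, rfl⟩ | ⟨rfl, rfl⟩ | ⟨rfl, rfl⟩
  · exact h
  · exact absurd hij h02
  · exact absurd hij.symm h02
  · exact absurd hij h35
  · exact absurd hij.symm h35

lemma nonempty_graphH_embedding {a b x y x' y' : V} {S : Set V} (hS : G.IsIndepSet S)
    (hx : x ∈ S) (hy : y ∈ S) (hx' : x' ∈ S) (hy' : y' ∈ S) (hxy : x ≠ y) (hxy' : x' ≠ y')
    (hab : G.Adj a b) (hax : G.Adj a x) (hay : G.Adj a y) (hbx' : G.Adj b x') (hby' : G.Adj b y')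
    (hbx : ¬G.Adj b x) (hby : ¬G.Adj b y) (hax' : ¬G.Adj a x') (hay' : ¬G.Adj a y') :
    Nonempty (graphH ↪g G) := by
  have hSadj : ∀ p ∈ S, ∀ q ∈ S, ¬G.Adj p q := fun p hp q hq h => hS hp hq h.ne h
  refine nonempty_graphH_embedding_of_adj_iff ![x, a, y, x', b, y'] (fun i j => ?_) hxy hxy'
  fin_cases i <;> fin_cases j <;> simp [graphH, *] <;> rw [G.adj_comm] <;> simp [*]

variable [Fintype V] [DecidableEq V] [DecidableRel G.Adj]

lemma card_inter_sdiff_le_one_of_graphH_free (hH : ¬Nonempty (graphH ↪g G))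
    {I : Finset V} (hI : G.IsIndepSet (I : Set V)) {u v : V} (huv : G.Adj u v) :
    #((G.neighborFinset u ∩ I) \ (G.neighborFinset v ∩ I)) ≤ 1 ∨
      #((G.neighborFinset v ∩ I) \ (G.neighborFinset u ∩ I)) ≤ 1 := by
  by_contra! h
  obtain ⟨x, hx, y, hy, hxy⟩ := one_lt_card.mp h.1
  obtain ⟨x', hx', y', hy', hxy'⟩ := one_lt_card.mp h.2
  simp only [mem_sdiff, mem_inter, mem_neighborFinset, not_and] at hx hy hx' hy'
  exact hH <| nonempty_graphH_embedding hI hx.1.2 hy.1.2 hx'.1.2 hy'.1.2 hxy hxy' huv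
    hx.1.1 hy.1.1 hx'.1.1 hy'.1.1 (fun h => hx.2 h hx.1.2) (fun h => hy.2 h hy.1.2)
    (fun h => hx'.2 h hx'.1.2) (fun h => hy'.2 h hy'.1.2)

end SimpleGraph

lemma CliqueSperner.sdiff_nonempty {V : Type*} [Fintype V] [DecidableEq V] {G : SimpleGraph V}
    [DecidableRel G.Adj] {K I : Finset V} (hcs : CliqueSperner G K I)
    {u v : V} (hu : u ∈ K) (hv : v ∈ K) (huv : u ≠ v) :
    ((G.neighborFinset u ∩ I) \ (G.neighborFinset v ∩ I)).Nonempty := by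
  rw [Finset.sdiff_nonempty]
  intro hsub
  rw [← coe_subset, coe_inter, coe_inter, G.coe_neighborFinset, G.coe_neighborFinset] at hsub
  exact huv (hcs u hu v hv hsub)

theorem stmt13 {V : Type*} [Fintype V] [DecidableEq V] (G : SimpleGraph V)
    [DecidableRel G.Adj] (K I : Finset V)
    (hsp : IsSplitPartition G K I) (hcs : CliqueSperner G K I)
    (hHfree : ¬ Nonempty (graphH ↪g G)) :
    OneSperner {e : Finset V | ∃ v ∈ K, e = G.neighborFinset v ∩ I} := by
  obtain ⟨-, -, hK, hI⟩ := hsp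
  rintro e ⟨u, hu, rfl⟩ f ⟨v, hv, rfl⟩ hef
  have huv : u ≠ v := by rintro rfl; exact hef rfl
  have h₁ := card_pos.mpr (hcs.sdiff_nonempty hu hv huv)
  have h₂ := card_pos.mpr (hcs.sdiff_nonempty hv hu huv.symm)
  have hle := SimpleGraph.card_inter_sdiff_le_one_of_graphH_free hHfree
    (fun p hp q hq _ => hI p hp q hq) (hK hu hv huv)
  omega
end

section
/- Let G be a finite simple connected split graph with at least two vertices. Then γ_c(G) = γ(G) and γ_t(G) = max(γ(G), 2). -/
open Finset

open scoped Classical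

/-! In a split graph without isolated vertices, a vertex of the independent side can be replaced
in a dominating set by any of its neighbours, which lie in the clique. Hence some minimum
dominating set lies inside the clique: it is connected, and it is total as soon as it has two
vertices. A single dominating vertex becomes a total dominating set after adding one neighbour,
and a total dominating set always has at least two vertices. -/

section Domination

variable {V : Type*} {G : SimpleGraph V}

def IsTotalDomSet (G : SimpleGraph V) (D : Finset V) : Prop :=
  ∀ v : V, ∃ u ∈ D, G.Adj u v

lemma IsTotalDomSet.isDomSet {D : Finset V} (hD : IsTotalDomSet G D) : IsDomSet G D :=
  fun v => Or.inr (hD v)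

lemma IsTotalDomSet.two_le_card [Nonempty V] {D : Finset V} (hD : IsTotalDomSet G D) :
    2 ≤ D.card := by
  obtain ⟨a, haD, -⟩ := hD (Classical.arbitrary V)
  obtain ⟨b, hbD, hba⟩ := hD a
  exact one_lt_card.mpr ⟨a, haD, b, hbD, hba.ne'⟩

lemma isTotalDomSet_univ [Fintype V] (hnbr : ∀ v : V, ∃ u, G.Adj v u) :
    IsTotalDomSet G univ := fun v =>
  let ⟨u, hvu⟩ := hnbr v
  ⟨u, mem_univ u, hvu.symm⟩

lemma isTotalDomSet_pair {a w : V} (ha : IsDomSet G {a}) (haw : G.Adj a w) :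
    IsTotalDomSet G {a, w} := by
  intro v
  rcases ha v with hv | ⟨u, hu, huv⟩
  · rw [mem_singleton.mp hv]
    exact ⟨w, mem_insert_of_mem (mem_singleton_self w), haw.symm⟩
  · rw [mem_singleton.mp hu] at huv
    exact ⟨a, mem_insert_self a _, huv⟩

lemma IsDomSet.nonempty [Nonempty V] {D : Finset V} (hD : IsDomSet G D) : D.Nonempty := by
  rcases hD (Classical.arbitrary V) with hv | ⟨u, hu, -⟩
  exacts [⟨_, hv⟩, ⟨u, hu⟩]

lemma IsDomSet.isTotalDomSet_of_isClique {D : Finset V} (hD : IsDomSet G D)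
    (hcl : G.IsClique (D : Set V)) (hcard : 2 ≤ D.card) : IsTotalDomSet G D := by
  intro v
  rcases hD v with hvD | hv
  · obtain ⟨u, huD, huv⟩ := exists_mem_ne hcard v
    exact ⟨u, huD, hcl huD hvD huv⟩
  · exact hv

variable [Fintype V]

lemma gamma_le_card {D : Finset V} (hD : IsDomSet G D) : gamma G ≤ D.card :=
  Nat.sInf_le ⟨D, hD, rfl⟩

lemma gammaC_le_card {D : Finset V} (hD : IsDomSet G D)
    (hconn : (G.induce (D : Set V)).Connected) : gammaC G ≤ D.card :=
  Nat.sInf_le ⟨D, hD, hconn, rfl⟩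

lemma gammaT_le_card {D : Finset V} (hD : IsTotalDomSet G D) : gammaT G ≤ D.card :=
  Nat.sInf_le ⟨D, hD, rfl⟩

lemma exists_isDomSet_card_eq_gamma (G : SimpleGraph V) :
    ∃ D : Finset V, IsDomSet G D ∧ D.card = gamma G :=
  Nat.sInf_mem (s := {n | ∃ D : Finset V, IsDomSet G D ∧ D.card = n})
    ⟨_, univ, fun v => Or.inl (mem_univ v), rfl⟩

lemma gamma_le_gammaC {D : Finset V} (hD : IsDomSet G D)
    (hconn : (G.induce (D : Set V)).Connected) : gamma G ≤ gammaC G := by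
  obtain ⟨C, hC, -, hCcard⟩ := Nat.sInf_mem
    (s := {n | ∃ D : Finset V, IsDomSet G D ∧ (G.induce (D : Set V)).Connected ∧ D.card = n})
    ⟨_, D, hD, hconn, rfl⟩
  exact (gamma_le_card hC).trans_eq hCcard

lemma max_gamma_two_le_gammaT [Nonempty V] (hnbr : ∀ v : V, ∃ u, G.Adj v u) :
    max (gamma G) 2 ≤ gammaT G := by
  obtain ⟨T, hT, hTcard⟩ := Nat.sInf_mem
    (s := {n | ∃ D : Finset V, IsTotalDomSet G D ∧ D.card = n})
    ⟨_, univ, isTotalDomSet_univ hnbr, rfl⟩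
  exact (max_le (gamma_le_card hT.isDomSet) hT.two_le_card).trans_eq hTcard

lemma gammaT_le_max_card_two {D : Finset V} (hD : IsDomSet G D) (hcl : G.IsClique (D : Set V))
    (hne : D.Nonempty) (hnbr : ∀ v : V, ∃ u, G.Adj v u) : gammaT G ≤ max D.card 2 := by
  rcases le_or_gt 2 D.card with h2 | h2
  · exact (gammaT_le_card (hD.isTotalDomSet_of_isClique hcl h2)).trans (le_max_left _ _)
  · have h1 : D.card = 1 := by have := hne.card_pos; omega
    obtain ⟨a, rfl⟩ := card_eq_one.mp h1
    obtain ⟨w, haw⟩ := hnbr a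
    calc gammaT G ≤ ({a, w} : Finset V).card := gammaT_le_card (isTotalDomSet_pair hD haw)
      _ ≤ 2 := card_le_two
      _ ≤ _ := le_max_right _ _

lemma IsDomSet.exists_subset_clique {K I D : Finset V} (hSP : IsSplitPartition G K I)
    (hnbr : ∀ v : V, ∃ u, G.Adj v u) (hD : IsDomSet G D) :
    ∃ D' ⊆ K, IsDomSet G D' ∧ D'.card ≤ D.card := by
  obtain ⟨-, hcover, hK, hI⟩ := hSP
  have mem_I : ∀ {x}, x ∉ K → x ∈ I := fun {x} hx =>
    (mem_union.mp (hcover.ge (mem_univ x))).resolve_left hx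
  choose nbr hnbr using hnbr
  have nbr_mem : ∀ {x}, x ∉ K → nbr x ∈ K := fun {x} hx => by
    by_contra h
    exact hI x (mem_I hx) _ (mem_I h) (hnbr x)
  set f : V → V := fun x => if x ∈ K then x else nbr x
  have hfK : ∀ x, f x ∈ K := fun x => by
    by_cases hx : x ∈ K <;> simp [f, hx, nbr_mem]
  refine ⟨D.image f, fun _ hy => ?_, fun v => ?_, card_image_le⟩
  · obtain ⟨x, -, rfl⟩ := mem_image.mp hy
    exact hfK x
  rcases hD v with hv | ⟨u, hu, huv⟩
  · by_cases hvK : v ∈ K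
    · exact Or.inl (mem_image.mpr ⟨v, hv, by simp [f, hvK]⟩)
    · exact Or.inr ⟨f v, mem_image_of_mem f hv, by simpa [f, hvK] using (hnbr v).symm⟩
  by_cases huK : u ∈ K
  · exact Or.inr ⟨u, mem_image.mpr ⟨u, hu, by simp [f, huK]⟩, huv⟩
  have hvK : v ∈ K := by
    by_contra hvK
    exact hI u (mem_I huK) v (mem_I hvK) huv
  by_cases hfv : f u = v
  · exact Or.inl (hfv ▸ mem_image_of_mem f hu)
  · exact Or.inr ⟨f u, mem_image_of_mem f hu, hK (hfK u) hvK hfv⟩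

end Domination

theorem stmt16_general {V : Type*} [Fintype V] (G : SimpleGraph V)
    (hconn : G.Connected) (hcard : 1 < Fintype.card V)
    (hsplit : ∃ K I : Finset V, IsSplitPartition G K I) :
    gammaC G = gamma G ∧ gammaT G = max (gamma G) 2 := by
  obtain ⟨K, I, hSP⟩ := hsplit
  have : Nontrivial V := Fintype.one_lt_card_iff_nontrivial.mp hcard
  have hnbr := hconn.preconnected.exists_adj_of_nontrivial
  obtain ⟨D₀, hD₀, hD₀card⟩ := exists_isDomSet_card_eq_gamma G
  obtain ⟨D, hDK, hD, hDcard⟩ := hD₀.exists_subset_clique hSP hnbr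
  have hDγ : D.card = gamma G := le_antisymm (hD₀card ▸ hDcard) (gamma_le_card hD)
  have hcl : G.IsClique (D : Set V) := hSP.2.2.1.subset (coe_subset.mpr hDK)
  have : Nonempty (D : Set V) := hD.nonempty.to_subtype
  have hDconn : (G.induce (D : Set V)).Connected :=
    (G.induce_eq_top.mpr hcl) ▸ SimpleGraph.connected_top
  refine ⟨le_antisymm (hDγ ▸ gammaC_le_card hD hDconn) (gamma_le_gammaC hD hDconn),
    le_antisymm ?_ (max_gamma_two_le_gammaT hnbr)⟩
  exact hDγ ▸ gammaT_le_max_card_two hD hcl hD.nonempty hnbr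

theorem stmt16 {V : Type*} [Fintype V] [DecidableEq V] (G : SimpleGraph V)
    (hconn : G.Connected) (hcard : 1 < Fintype.card V)
    (hsplit : ∃ K I : Finset V, IsSplitPartition G K I) :
    gammaC G = gamma G ∧ gammaT G = max (gamma G) 2 :=
  stmt16_general G hconn hcard hsplit
end

section
/- Let H = (V, E) be a hypergraph. Then H is 1-Sperner if and only if the edge-clique split graph of H is clique-Sperner (with respect to the split partition (E, V)) and has no induced subgraph isomorphic to the graph H₀, where H₀ is the 6-vertex graph obtained from the disjoint union of two paths on three vertices by adding an edge between the two middle vertices. -/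
open Finset

open scoped Classical

/-! A family is 1-Sperner iff it is an antichain for inclusion and no two hyperedges `e, f`
have two private vertices each. The antichain condition is the clique-Sperner condition of
the edge-clique graph. In an induced copy of `H` inside that graph, each middle vertex has two
non-adjacent neighbours, which forces it to be a hyperedge, since a vertex of `V` only sees the
clique `E`; the four leaves are then vertices of `V`, two in `e \ f` and two in `f \ e`.
Conversely, two such pairs of vertices together with `e` and `f` induce `H`. -/

lemma oneSperner_iff {V : Type*} [DecidableEq V] {E : Set (Finset V)} :
    OneSperner E ↔
      IsAntichain (· ⊆ ·) E ∧ ¬ ∃ e ∈ E, ∃ f ∈ E, 1 < #(e \ f) ∧ 1 < #(f \ e) := by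
  have min_eq_one (e f : Finset V) : min #(e \ f) #(f \ e) = 1 ↔
      (¬ e ⊆ f ∧ ¬ f ⊆ e) ∧ ¬ (1 < #(e \ f) ∧ 1 < #(f \ e)) := by
    rw [← sdiff_nonempty, ← sdiff_nonempty, ← card_pos, ← card_pos]
    omega
  constructor
  · intro h
    refine ⟨fun e he f hf hne => ((min_eq_one e f).1 (h e he f hf hne)).1.1, ?_⟩
    rintro ⟨e, he, f, hf, hef⟩
    obtain rfl | hne := eq_or_ne e f
    · simp at hef
    · exact ((min_eq_one e f).1 (h e he f hf hne)).2 hef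
  · rintro ⟨hA, hpriv⟩ e he f hf hne
    exact (min_eq_one e f).2
      ⟨⟨hA he hf hne, hA hf he hne.symm⟩, fun hef => hpriv ⟨e, he, f, hf, hef⟩⟩

lemma graphH_adj_iff (a b : Fin 6) : graphH.Adj a b ↔ a ≠ b ∧
    ((a, b) ∈ ([(0,1),(1,2),(3,4),(4,5),(1,4)] : List (Fin 6 × Fin 6)) ∨
     (b, a) ∈ ([(0,1),(1,2),(3,4),(4,5),(1,4)] : List (Fin 6 × Fin 6))) := .rfl

instance : DecidableRel graphH.Adj := fun a b => decidable_of_iff' _ (graphH_adj_iff a b)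

namespace edgeCliqueGraph

variable {V : Type*} {E : Finset (Finset V)}

@[simp] lemma adj_inl_inl {e f : {x // x ∈ E}} :
    (edgeCliqueGraph E).Adj (.inl e) (.inl f) ↔ e ≠ f := .rfl

@[simp] lemma adj_inl_inr {e : {x // x ∈ E}} {v : V} :
    (edgeCliqueGraph E).Adj (.inl e) (.inr v) ↔ v ∈ (e : Finset V) := .rfl

@[simp] lemma adj_inr_inl {e : {x // x ∈ E}} {v : V} :
    (edgeCliqueGraph E).Adj (.inr v) (.inl e) ↔ v ∈ (e : Finset V) := .rfl

@[simp] lemma not_adj_inr_inr {u v : V} : ¬ (edgeCliqueGraph E).Adj (.inr u) (.inr v) := id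

lemma forall_eq_of_adj_inr_imp_iff_isAntichain :
    (∀ e f : {x // x ∈ E}, (∀ v : V, (edgeCliqueGraph E).Adj (.inl e) (.inr v) →
        (edgeCliqueGraph E).Adj (.inl f) (.inr v)) → e = f) ↔
      IsAntichain (· ⊆ ·) (E : Set (Finset V)) := by
  simp only [adj_inl_inr]
  constructor
  · intro h e he f hf hne hef
    exact hne (congrArg Subtype.val (h ⟨e, he⟩ ⟨f, hf⟩ hef))
  · intro h e f hef
    exact Subtype.ext (h.eq e.2 f.2 hef)

lemma exists_eq_inl_of_adj_of_adj {x y z : {e // e ∈ E} ⊕ V}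
    (hxy : (edgeCliqueGraph E).Adj x y) (hxz : (edgeCliqueGraph E).Adj x z) (hyz : y ≠ z)
    (hnyz : ¬ (edgeCliqueGraph E).Adj y z) : ∃ e, x = .inl e := by
  rcases x with e | v
  · exact ⟨e, rfl⟩
  rcases y with f | u <;> rcases z with g | w <;> simp_all

lemma exists_eq_inr_of_adj_of_not_adj {x : {e // e ∈ E} ⊕ V} {e f : {e // e ∈ E}}
    (hxe : (edgeCliqueGraph E).Adj x (.inl e)) (hxf : ¬ (edgeCliqueGraph E).Adj x (.inl f))
    (hx : x ≠ .inl f) : ∃ v, v ∈ (e : Finset V) ∧ v ∉ (f : Finset V) ∧ x = .inr v := by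
  rcases x with g | v <;> simp_all

variable [DecidableEq V]

lemma exists_private_pairs_of_graphH_embedding (φ : graphH ↪g edgeCliqueGraph E) :
    ∃ e ∈ E, ∃ f ∈ E, 1 < #(e \ f) ∧ 1 < #(f \ e) := by
  have adj {a b : Fin 6} (h : graphH.Adj a b) := φ.map_adj_iff.2 h
  have not_adj {a b : Fin 6} (h : ¬ graphH.Adj a b) := φ.map_adj_iff.not.2 h
  obtain ⟨e, he⟩ := exists_eq_inl_of_adj_of_adj (adj (a := 1) (b := 0) (by decide))
    (adj (b := 2) (by decide)) (φ.injective.ne (by decide)) (not_adj (by decide))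
  obtain ⟨f, hf⟩ := exists_eq_inl_of_adj_of_adj (adj (a := 4) (b := 3) (by decide))
    (adj (b := 5) (by decide)) (φ.injective.ne (by decide)) (not_adj (by decide))
  have leaves {g h : {e // e ∈ E}} {a a' b c : Fin 6} (hb : φ b = .inl g) (hc : φ c = .inl h)
      (ha : graphH.Adj a b ∧ ¬ graphH.Adj a c ∧ a ≠ c)
      (ha' : graphH.Adj a' b ∧ ¬ graphH.Adj a' c ∧ a' ≠ c) (haa' : a ≠ a') :
      1 < #((g : Finset V) \ h) := by
    obtain ⟨v, hvg, hvh, hva⟩ := exists_eq_inr_of_adj_of_not_adj (hb ▸ adj ha.1)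
      (hc ▸ not_adj ha.2.1) (hc ▸ φ.injective.ne ha.2.2)
    obtain ⟨v', hvg', hvh', hva'⟩ := exists_eq_inr_of_adj_of_not_adj (hb ▸ adj ha'.1)
      (hc ▸ not_adj ha'.2.1) (hc ▸ φ.injective.ne ha'.2.2)
    refine one_lt_card.2 ⟨v, mem_sdiff.2 ⟨hvg, hvh⟩, v', mem_sdiff.2 ⟨hvg', hvh'⟩, ?_⟩
    rintro rfl
    exact φ.injective.ne haa' (hva.trans hva'.symm)
  exact ⟨e, e.2, f, f.2, leaves (a := 0) (a' := 2) he hf (by decide) (by decide) (by decide),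
    leaves (a := 3) (a' := 5) hf he (by decide) (by decide) (by decide)⟩

lemma nonempty_graphH_embedding_of_private_pairs {e f : Finset V} (he : e ∈ E) (hf : f ∈ E)
    (hef : 1 < #(e \ f)) (hfe : 1 < #(f \ e)) : Nonempty (graphH ↪g edgeCliqueGraph E) := by
  obtain ⟨u, hu, u', hu', huu'⟩ := one_lt_card.1 hef
  obtain ⟨w, hw, w', hw', hww'⟩ := one_lt_card.1 hfe
  rw [mem_sdiff] at hu hu' hw hw'
  have hne : e ≠ f := by rintro rfl; exact hu.2 hu.1
  let φ : Fin 6 → {e // e ∈ E} ⊕ V :=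
    ![.inr u, .inl ⟨e, he⟩, .inr u', .inr w, .inl ⟨f, hf⟩, .inr w']
  have hφ : Function.Injective φ := by
    rw [← List.nodup_ofFn]
    simp [φ, huu', hww', hne, ne_of_mem_of_not_mem hu.1 hw.2, ne_of_mem_of_not_mem hu.1 hw'.2,
      ne_of_mem_of_not_mem hu'.1 hw.2, ne_of_mem_of_not_mem hu'.1 hw'.2]
  refine ⟨⟨⟨φ, hφ⟩, fun {a b} => ?_⟩⟩
  change (edgeCliqueGraph E).Adj (φ a) (φ b) ↔ graphH.Adj a b
  fin_cases a <;> fin_cases b <;> simp [φ, graphH_adj_iff, hu, hu', hw, hw', hne, hne.symm]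

lemma nonempty_graphH_embedding_iff :
    Nonempty (graphH ↪g edgeCliqueGraph E) ↔
      ∃ e ∈ E, ∃ f ∈ E, 1 < #(e \ f) ∧ 1 < #(f \ e) :=
  ⟨fun ⟨φ⟩ => exists_private_pairs_of_graphH_embedding φ,
    fun ⟨_, he, _, hf, hef, hfe⟩ => nonempty_graphH_embedding_of_private_pairs he hf hef hfe⟩

end edgeCliqueGraph

theorem stmt19 {V : Type*} [DecidableEq V] (E : Finset (Finset V)) :
    OneSperner (E : Set (Finset V)) ↔
      ((∀ e f : {x // x ∈ E},
          (∀ v : V, (edgeCliqueGraph E).Adj (Sum.inl e) (Sum.inr v) →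
            (edgeCliqueGraph E).Adj (Sum.inl f) (Sum.inr v)) → e = f) ∧
        ¬ Nonempty (graphH ↪g edgeCliqueGraph E)) := by
  rw [oneSperner_iff, edgeCliqueGraph.forall_eq_of_adj_inr_imp_iff_isAntichain,
    edgeCliqueGraph.nonempty_graphH_embedding_iff]
  simp only [mem_coe]
end
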